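/- Let R be a set of requests on a bidirected tree T rooted at a vertex z, with R^-, R^+, R^∨ the sets of converging, diverging and unimodal requests of R, and let I ⊆ R be a set of pairwise non-interfering requests. Then either I consists of exactly two unimodal requests, or |I ∩ (R^+ ∪ R^∨)| ≤ 1, or |I ∩ (R^- ∪ R^∨)| ≤ 1. -/

import Mathlib

open SimpleGraph

/-- A request in a bidirected tree `T`: a directed path of length at least 1,
encoded as a path (walk without vertex repetition) in the underlying tree. -/
structure Request {V : Type*} (T : SimpleGraph V) where
  s : V
  t : V
  toWalk : T.Walk s t
  isPath : toWalk.IsPath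
  one_le_length : 1 ≤ toWalk.length

namespace Request

variable {V : Type*} {T : SimpleGraph V}

/-- The second vertex `s_r⁺` of a request. -/
def sPlus (r : Request T) : V := r.toWalk.getVert 1

/-- The penultimate vertex `t_r⁻` of a request. -/
def tMinus (r : Request T) : V := r.toWalk.getVert (r.toWalk.length - 1)

end Request

variable {V : Type*}

/-- `r` interferes on `r'` if the unique path from `s_r` to `t_{r'}` in the tree `T`
has first arc the emission arc of `r` and last arc the reception arc of `r'`. -/
def InterferesOn (T : SimpleGraph V) (r r' : Request T) : Prop :=
  ∃ p : T.Walk r.s r'.t, p.IsPath ∧ 1 ≤ p.length ∧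
    p.getVert 1 = r.sPlus ∧ p.getVert (p.length - 1) = r'.tMinus

/-- Two requests interfere if one of them interferes on the other. -/
def Interfere (T : SimpleGraph V) (r r' : Request T) : Prop :=
  InterferesOn T r r' ∨ InterferesOn T r' r

/-- `x` is an ancestor of `y` in the tree `T` rooted at `z`:
`x` lies on the unique path from `z` to `y`. -/
def Ancestor (T : SimpleGraph V) (z x y : V) : Prop :=
  ∃ p : T.Walk z y, p.IsPath ∧ x ∈ p.support

/-- Two vertices are related if one is an ancestor of the other. -/
def Related (T : SimpleGraph V) (z x y : V) : Prop :=
  Ancestor T z x y ∨ Ancestor T z y x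

/-- A request is converging (w.r.t. root `z`) if all its arcs are directed towards `z`,
i.e. the head of every arc is an ancestor of its tail. -/
def Converging (T : SimpleGraph V) (z : V) (r : Request T) : Prop :=
  ∀ i < r.toWalk.length, Ancestor T z (r.toWalk.getVert (i+1)) (r.toWalk.getVert i)

/-- A request is diverging (w.r.t. root `z`) if all its arcs are directed away from `z`,
i.e. the tail of every arc is an ancestor of its head. -/
def Diverging (T : SimpleGraph V) (z : V) (r : Request T) : Prop :=
  ∀ i < r.toWalk.length, Ancestor T z (r.toWalk.getVert i) (r.toWalk.getVert (i+1))

/-- A request is unimodal (w.r.t. root `z`) if it is neither converging nor diverging. -/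
def Unimodal (T : SimpleGraph V) (z : V) (r : Request T) : Prop :=
  ¬ Converging T z r ∧ ¬ Diverging T z r

/-- `m` is the middle of the request `r` (w.r.t. root `z`): the vertex of `r`
closest to the root, i.e. the vertex of `r` which is an ancestor of every vertex of `r`. -/
def IsMiddle (T : SimpleGraph V) (z : V) (r : Request T) (m : V) : Prop :=
  m ∈ r.toWalk.support ∧ ∀ y ∈ r.toWalk.support, Ancestor T z m y

/-- The interference graph of a family of requests: two (indices of) requests are
adjacent iff they are distinct and the requests interfere. -/
def interferenceGraph (T : SimpleGraph V) {ι : Type*} (f : ι → Request T) :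
    SimpleGraph ι where
  Adj i j := i ≠ j ∧ Interfere T (f i) (f j)
  symm := by
    constructor
    intro i j h
    exact ⟨h.1.symm, h.2.symm⟩
  loopless := by
    constructor
    intro i h
    exact h.1 rfl

/-- The interference graph of a set of requests. -/
def interGraph (T : SimpleGraph V) (R : Set (Request T)) : SimpleGraph ↥R :=
  interferenceGraph T (fun r => (r : Request T))

/-- The pair `(a, b)` is an arc joining two consecutive vertices of the
bidirected path corresponding to the walk `p` (in either direction). -/
def ArcOn (T : SimpleGraph V) {u v : V} (p : T.Walk u v) (a b : V) : Prop :=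
  ∃ j < p.length, (p.getVert j = a ∧ p.getVert (j+1) = b) ∨
    (p.getVert j = b ∧ p.getVert (j+1) = a)

/-- The request `r` shares an arc with the bidirected path corresponding to
the walk `p`. -/
def SharesArc (T : SimpleGraph V) {u v : V} (p : T.Walk u v) (r : Request T) : Prop :=
  ∃ i < r.toWalk.length, ArcOn T p (r.toWalk.getVert i) (r.toWalk.getVert (i+1))

/-- A leaf of a tree: a vertex with at most one neighbour. -/
def IsLeaf (T : SimpleGraph V) (y : V) : Prop :=
  {w | T.Adj y w}.Subsingleton

/-- A comparability graph: there is a partial order on the vertices such that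
two distinct vertices are adjacent iff they are comparable. -/
def IsComparabilityGraph {α : Type*} (G : SimpleGraph α) : Prop :=
  ∃ le : α → α → Prop, IsPartialOrder α le ∧ ∀ a b, G.Adj a b ↔ a ≠ b ∧ (le a b ∨ le b a)

/-- A cobipartite graph: the vertex set can be partitioned into two cliques. -/
def IsCobipartite {α : Type*} (G : SimpleGraph α) : Prop :=
  ∃ A : Set α, G.IsClique A ∧ G.IsClique Aᶜ

/-!
Call a request *upward-emitting* if it is not diverging (its emission arc points to the root)
and *downward-receiving* if it is not converging; unimodal requests are both, and every request
is one of the two. For distinct non-interfering requests of these kinds: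
* the sources of two upward-emitting requests are unrelated,
* the targets of two downward-receiving requests are unrelated,
* the source of an upward-emitting request and the target of a downward-receiving one are
  related, since otherwise the tree path between them starts with the emission arc of the first
  and ends with the reception arc of the second.

In a rooted tree, a vertex related to two unrelated vertices is an ancestor of both. So if
`x, y` are upward-emitting, `u, v` downward-receiving, `x ∉ {u, v}` and `w ∈ {u, v} \ {y}`, then
`s_x ≤ t_w ≤ s_y`, which is impossible. Hence the upward-emitting and the downward-receiving
requests of `I` form one and the same pair, and both of its members are unimodal.
-/

theorem SimpleGraph.IsAcyclic.eq_of_isPath {T : SimpleGraph V} (hT : T.IsAcyclic) {u v : V}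
    {p q : T.Walk u v} (hp : p.IsPath) (hq : q.IsPath) : p = q :=
  congrArg Subtype.val ((hT.subsingleton_path u v).elim ⟨p, hp⟩ ⟨q, hq⟩)

theorem SimpleGraph.IsTree.exists_isPath {T : SimpleGraph V} (hT : T.IsTree) (u v : V) :
    ∃ p : T.Walk u v, p.IsPath :=
  (hT.existsUnique_path u v).exists

section RootedTree

open Walk

variable {T : SimpleGraph V} {z : V}

theorem Related.symm {x y : V} (h : Related T z x y) : Related T z y x :=
  Or.symm h

theorem ancestor_iff_mem_support (hT : T.IsAcyclic) {x y : V} {p : T.Walk z y}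
    (hp : p.IsPath) : Ancestor T z x y ↔ x ∈ p.support :=
  ⟨fun ⟨_, hq, hx⟩ => hT.eq_of_isPath hq hp ▸ hx, fun hx => ⟨p, hp, hx⟩⟩

theorem ancestor_refl (hT : T.IsTree) (x : V) : Ancestor T z x x :=
  let ⟨p, hp⟩ := hT.exists_isPath z x
  ⟨p, hp, p.end_mem_support⟩

theorem ancestor_of_mem_support_of_isPath_append {a b v : V} {p : T.Walk z a} {q : T.Walk a b}
    (h : (p.append q).IsPath) (hv : v ∈ q.support) : Ancestor T z a v := by
  obtain ⟨q₁, q₂, -, -, rfl⟩ := h.of_append_right.mem_support_iff_exists_append.1 hv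
  rw [append_assoc] at h
  exact ⟨p.append q₁, h.of_append_left, (mem_support_append_iff _ _).2 (.inl p.end_mem_support)⟩

theorem ancestor_trans (hT : T.IsAcyclic) {x y w : V} (hxy : Ancestor T z x y)
    (hyw : Ancestor T z y w) : Ancestor T z x w := by
  obtain ⟨q, hq, hy⟩ := hyw
  obtain ⟨q₁, q₂, hq₁, -, rfl⟩ := hq.mem_support_iff_exists_append.1 hy
  exact ⟨_, hq, (mem_support_append_iff _ _).2 (.inl ((ancestor_iff_mem_support hT hq₁).1 hxy))⟩

theorem ancestor_antisymm (hT : T.IsAcyclic) {x y : V} (hxy : Ancestor T z x y)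
    (hyx : Ancestor T z y x) : x = y := by
  obtain ⟨p, hp, hx⟩ := hxy
  obtain ⟨p₁, p₂, hp₁, -, rfl⟩ := hp.mem_support_iff_exists_append.1 hx
  by_contra hne
  exact hp.ne_of_mem_support_of_append (Ne.symm hne) ((ancestor_iff_mem_support hT hp₁).1 hyx)
    p₂.end_mem_support rfl

theorem related_of_ancestor_of_ancestor (hT : T.IsAcyclic) {x y v : V}
    (hx : Ancestor T z x v) (hy : Ancestor T z y v) : Related T z x y := by
  obtain ⟨p, hp, hxp⟩ := hx
  obtain ⟨p₁, p₂, hp₁, -, rfl⟩ := hp.mem_support_iff_exists_append.1 hxp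
  rcases (mem_support_append_iff _ _).1 ((ancestor_iff_mem_support hT hp).1 hy) with hy | hy
  · exact .inr ⟨p₁, hp₁, hy⟩
  · exact .inl (ancestor_of_mem_support_of_isPath_append hp hy)

theorem ancestor_of_related_of_not_related (hT : T.IsAcyclic) {p q r : V}
    (hpq : ¬ Related T z p q) (hp : Related T z r p) (hq : Related T z r q) :
    Ancestor T z r q := by
  rcases hq with hrq | hqr
  · exact hrq
  rcases hp with hrp | hpr
  · exact absurd (.inr (ancestor_trans hT hqr hrp)) hpq
  · exact absurd (related_of_ancestor_of_ancestor hT hpr hqr) hpq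

theorem related_of_adj (hT : T.IsTree) {u v : V} (h : T.Adj u v) : Related T z u v := by
  obtain ⟨p, hp⟩ := hT.exists_isPath z u
  obtain ⟨q, hq⟩ := hT.exists_isPath z v
  by_cases hu : u ∈ q.support
  · exact .inl ⟨q, hq, hu⟩
  · exact .inr ⟨p, hp, hT.isAcyclic.mem_support_of_ne_mem_support_of_adj_of_isPath hp hq h hu⟩

theorem eq_of_adj_of_ancestor (hT : T.IsAcyclic) {u w v : V} (hu : T.Adj u v)
    (hu' : Ancestor T z u v) (hw : T.Adj w v) (hw' : Ancestor T z w v) : u = w := by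
  obtain ⟨p, hp, hup⟩ := hu'
  rw [hT.eq_penultimate_of_adj_end hp hu.symm hup,
    hT.eq_penultimate_of_adj_end hp hw.symm ((ancestor_iff_mem_support hT hp).1 hw')]

end RootedTree

namespace SimpleGraph.Walk

variable {T : SimpleGraph V} {z : V}

/-- `Diverging T z r` is `r.toWalk.IsDescending z` by definition. -/
def IsDescending (z : V) {u v : V} (p : T.Walk u v) : Prop :=
  ∀ i < p.length, Ancestor T z (p.getVert i) (p.getVert (i + 1))

theorem isDescending_cons_iff {u v w : V} (h : T.Adj u v) (q : T.Walk v w) :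
    (cons h q).IsDescending z ↔ Ancestor T z u v ∧ q.IsDescending z := by
  refine ⟨fun hd => ⟨by simpa using hd 0 (by simp), fun i hi => ?_⟩, ?_⟩
  · simpa using hd (i + 1) (by simpa using hi)
  · rintro ⟨huv, hq⟩ (_ | i) hi
    · simpa using huv
    · simpa using hq i (by simpa using hi)

theorem IsDescending.ancestor (hT : T.IsTree) {u v : V} {p : T.Walk u v}
    (hp : p.IsDescending z) : Ancestor T z u v := by
  induction p with
  | nil => exact ancestor_refl hT _
  | cons h q ih =>
    rw [isDescending_cons_iff] at hp
    exact ancestor_trans hT.isAcyclic hp.1 (ih hp.2)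

/-- A path that steps away from the root once can never step back towards it: it would have to
return to the parent it came from. -/
theorem IsPath.isDescending_of_ancestor_snd (hT : T.IsTree) {u v : V} {p : T.Walk u v}
    (hp : p.IsPath) (h : Ancestor T z u p.snd) : p.IsDescending z := by
  induction p with
  | nil => intro i hi; simp at hi
  | cons hadj q ih =>
    rw [cons_isPath_iff] at hp
    rw [snd_cons] at h
    refine (isDescending_cons_iff hadj q).2 ⟨h, ?_⟩
    by_cases hq : q.Nil
    · intro i hi
      rw [length_eq_zero_iff.2 hq] at hi
      omega
    refine ih hp.1 ((related_of_adj hT (q.adj_snd hq)).resolve_right fun h' => hp.2 ?_)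
    rw [eq_of_adj_of_ancestor hT.isAcyclic hadj h (q.adj_snd hq).symm h']
    exact q.getVert_mem_support 1

theorem IsPath.snd_ancestor_end (hT : T.IsTree) {u v : V} {p : T.Walk u v} (hp : p.IsPath)
    (h : Ancestor T z u p.snd) : Ancestor T z p.snd v := by
  cases p with
  | nil => exact h
  | cons hadj q =>
    have hd := (isDescending_cons_iff hadj q).1 (hp.isDescending_of_ancestor_snd hT h)
    rw [snd_cons]
    exact hd.2.ancestor hT

theorem IsPath.mem_support_of_not_ancestor (hT : T.IsTree) {a b u : V} {p : T.Walk a b}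
    (hp : p.IsPath) (hu : T.Adj u a) (hua : Ancestor T z u a) (hab : ¬ Ancestor T z a b) :
    u ∈ p.support := by
  have hnil : ¬ p.Nil := fun h => hab (h.eq ▸ ancestor_refl hT a)
  rcases related_of_adj hT (p.adj_snd hnil) with h | h
  · exact absurd (ancestor_trans hT.isAcyclic h (hp.snd_ancestor_end hT h)) hab
  · rw [eq_of_adj_of_ancestor hT.isAcyclic hu hua (p.adj_snd hnil).symm h]
    exact p.getVert_mem_support 1

theorem IsPath.mem_support_iff_ancestor (hT : T.IsTree) {a b v : V} {p : T.Walk a b}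
    (hp : p.IsPath) (hab : Ancestor T z a b) :
    v ∈ p.support ↔ Ancestor T z a v ∧ Ancestor T z v b := by
  obtain ⟨P, hP, haP⟩ := hab
  obtain ⟨p₀, p₁, hp₀, hp₁, rfl⟩ := hP.mem_support_iff_exists_append.1 haP
  obtain rfl := hT.isAcyclic.eq_of_isPath hp hp₁
  refine ⟨fun hv => ⟨ancestor_of_mem_support_of_isPath_append hP hv,
    ⟨_, hP, (mem_support_append_iff _ _).2 (.inr hv)⟩⟩, fun ⟨hav, hvb⟩ => ?_⟩
  rcases (mem_support_append_iff _ _).1 ((ancestor_iff_mem_support hT.isAcyclic hP).1 hvb)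
    with hv | hv
  · obtain rfl := ancestor_antisymm hT.isAcyclic hav ⟨p₀, hp₀, hv⟩
    exact p.start_mem_support
  · exact hv

end SimpleGraph.Walk

section PairsOfFamilies

variable {T : SimpleGraph V} {z : V} {ι : Type*} {s t : ι → V} {E F : Set ι}

theorem mem_pair_of_pairwise_not_related (hT : T.IsAcyclic)
    (hE : E.Pairwise fun i j => ¬ Related T z (s i) (s j))
    (hF : F.Pairwise fun i j => ¬ Related T z (t i) (t j))
    (hEF : ∀ i ∈ E, ∀ j ∈ F, i ≠ j → Related T z (s i) (t j))
    {x y u v : ι} (hx : x ∈ E) (hy : y ∈ E) (hxy : x ≠ y) (hu : u ∈ F) (hv : v ∈ F)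
    (huv : u ≠ v) : x ∈ ({u, v} : Set ι) := by
  have key : ∀ w ∈ F, ∀ w' ∈ F, w ≠ w' → x ≠ w → x ≠ w' → y ≠ w → False := by
    intro w hw w' hw' hww' hxw hxw' hyw
    have hsxtw : Ancestor T z (s x) (t w) := ancestor_of_related_of_not_related hT
      (hF hw' hw hww'.symm) (hEF x hx w' hw' hxw') (hEF x hx w hw hxw)
    have htwsy : Ancestor T z (t w) (s y) := ancestor_of_related_of_not_related hT
      (hE hx hy hxy) (hEF x hx w hw hxw).symm (hEF y hy w hw hyw).symm
    exact hE hx hy hxy (.inl (ancestor_trans hT hsxtw htwsy))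
  by_contra hxuv
  simp only [Set.mem_insert_iff, Set.mem_singleton_iff, not_or] at hxuv
  by_cases hyu : y = u
  · exact key v hv u hu huv.symm hxuv.2 hxuv.1 (hyu ▸ huv)
  · exact key u hu v hv huv hxuv.1 hxuv.2 hyu

theorem subset_pair_of_pairwise_not_related (hT : T.IsAcyclic)
    (hE : E.Pairwise fun i j => ¬ Related T z (s i) (s j))
    (hF : F.Pairwise fun i j => ¬ Related T z (t i) (t j))
    (hEF : ∀ i ∈ E, ∀ j ∈ F, i ≠ j → Related T z (s i) (t j))
    {x y u v : ι} (hx : x ∈ E) (hy : y ∈ E) (hxy : x ≠ y) (hu : u ∈ F) (hv : v ∈ F)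
    (huv : u ≠ v) : E ⊆ {u, v} := by
  intro w hw
  obtain rfl | hwx := eq_or_ne w x
  · exact mem_pair_of_pairwise_not_related hT hE hF hEF hw hy hxy hu hv huv
  · exact mem_pair_of_pairwise_not_related hT hE hF hEF hw hx hwx hu hv huv

theorem eq_pair_of_pairwise_not_related (hT : T.IsAcyclic)
    (hE : E.Pairwise fun i j => ¬ Related T z (s i) (s j))
    (hF : F.Pairwise fun i j => ¬ Related T z (t i) (t j))
    (hEF : ∀ i ∈ E, ∀ j ∈ F, i ≠ j → Related T z (s i) (t j))
    {x y u v : ι} (hx : x ∈ E) (hy : y ∈ E) (hxy : x ≠ y) (hu : u ∈ F) (hv : v ∈ F)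
    (huv : u ≠ v) : E = {u, v} ∧ F = {u, v} := by
  have hEuv := subset_pair_of_pairwise_not_related hT hE hF hEF hx hy hxy hu hv huv
  have hFxy := subset_pair_of_pairwise_not_related hT hF hE
    (fun i hi j hj hij => (hEF j hj i hi hij.symm).symm) hu hv huv hx hy hxy
  have huvF := Set.pair_subset hu hv
  have hxyE := Set.pair_subset hx hy
  exact ⟨hEuv.antisymm (huvF.trans (hFxy.trans hxyE)),
    (hFxy.trans (hxyE.trans hEuv)).antisymm huvF⟩

end PairsOfFamilies

section Requests

open Walk

variable {T : SimpleGraph V} {z : V}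

namespace Request

theorem not_nil (r : Request T) : ¬ r.toWalk.Nil :=
  not_nil_iff_lt_length.2 r.one_le_length

theorem adj_sPlus (r : Request T) : T.Adj r.s r.sPlus :=
  r.toWalk.adj_snd r.not_nil

theorem adj_tMinus (r : Request T) : T.Adj r.tMinus r.t :=
  r.toWalk.adj_penultimate r.not_nil

end Request

theorem Interfere.symm {r r' : Request T} (h : Interfere T r r') : Interfere T r' r :=
  Or.symm h

theorem converging_of_isDescending_reverse {r : Request T}
    (h : r.toWalk.reverse.IsDescending z) : Converging T z r := by
  intro i hi
  have := h (r.toWalk.length - 1 - i) (by rw [length_reverse]; omega)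
  rwa [getVert_reverse, getVert_reverse, show r.toWalk.length - (r.toWalk.length - 1 - i) = i + 1
    by omega, show r.toWalk.length - (r.toWalk.length - 1 - i + 1) = i by omega] at this

theorem sPlus_ancestor_of_not_diverging (hT : T.IsTree) {r : Request T}
    (h : ¬ Diverging T z r) : Ancestor T z r.sPlus r.s :=
  (related_of_adj hT r.adj_sPlus).resolve_left fun h' =>
    h (r.isPath.isDescending_of_ancestor_snd hT h')

theorem tMinus_ancestor_of_not_converging (hT : T.IsTree) {r : Request T}
    (h : ¬ Converging T z r) : Ancestor T z r.tMinus r.t :=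
  (related_of_adj hT r.adj_tMinus).resolve_right fun h' =>
    h (converging_of_isDescending_reverse
      (r.isPath.reverse.isDescending_of_ancestor_snd hT (by rwa [snd_reverse])))

theorem Converging.t_ancestor_tMinus {r : Request T} (h : Converging T z r) :
    Ancestor T z r.t r.tMinus := by
  have := h (r.toWalk.length - 1) (by have := r.one_le_length; omega)
  rwa [Nat.sub_add_cancel r.one_le_length, getVert_length] at this

theorem Converging.tMinus_ancestor_s (hT : T.IsTree) {r : Request T} (h : Converging T z r) :
    Ancestor T z r.tMinus r.s := by
  have := r.isPath.reverse.snd_ancestor_end hT (by rw [snd_reverse]; exact h.t_ancestor_tMinus)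
  rwa [snd_reverse] at this

theorem Diverging.s_ancestor_sPlus {r : Request T} (h : Diverging T z r) :
    Ancestor T z r.s r.sPlus := by
  have := h 0 r.one_le_length
  rwa [getVert_zero] at this

theorem Diverging.sPlus_ancestor_t (hT : T.IsTree) {r : Request T} (h : Diverging T z r) :
    Ancestor T z r.sPlus r.t :=
  r.isPath.snd_ancestor_end hT h.s_ancestor_sPlus

theorem Converging.not_diverging (hT : T.IsAcyclic) {r : Request T} (hc : Converging T z r) :
    ¬ Diverging T z r := fun hd => by
  have := hc 0 r.one_le_length
  rw [getVert_zero] at this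
  exact r.adj_sPlus.ne (ancestor_antisymm hT hd.s_ancestor_sPlus this)

theorem Unimodal.not_related (hT : T.IsTree) {r : Request T} (h : Unimodal T z r) :
    ¬ Related T z r.s r.t := by
  rintro (hst | hts)
  · have := (r.isPath.mem_support_iff_ancestor hT hst).1 (r.toWalk.getVert_mem_support 1)
    exact r.adj_sPlus.ne
      (ancestor_antisymm hT.isAcyclic this.1 (sPlus_ancestor_of_not_diverging hT h.2))
  · have hmem : r.tMinus ∈ r.toWalk.reverse.support := by
      rw [support_reverse, List.mem_reverse]
      exact r.toWalk.getVert_mem_support _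
    have := (r.isPath.reverse.mem_support_iff_ancestor hT hts).1 hmem
    exact r.adj_tMinus.ne
      (ancestor_antisymm hT.isAcyclic (tMinus_ancestor_of_not_converging hT h.1) this.1)

theorem interferesOn_of_mem_support (hT : T.IsAcyclic) {r r' : Request T} {p : T.Walk r.s r'.t}
    (hp : p.IsPath) (hs : r.sPlus ∈ p.support) (ht : r'.tMinus ∈ p.support) :
    InterferesOn T r r' := by
  have hnil : ¬ p.Nil := fun h =>
    r.adj_sPlus.ne (by simpa [nil_iff_support_eq.1 h] using hs : r.sPlus = r.s).symm
  exact ⟨p, hp, not_nil_iff_lt_length.1 hnil, (hT.eq_snd_of_adj_start hp r.adj_sPlus hs).symm,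
    (hT.eq_penultimate_of_adj_end hp r'.adj_tMinus.symm ht).symm⟩

theorem interferesOn_of_not_related (hT : T.IsTree) {r r' : Request T} (hr : ¬ Diverging T z r)
    (hr' : ¬ Converging T z r') (h : ¬ Related T z r.s r'.t) : InterferesOn T r r' := by
  obtain ⟨p, hp⟩ := hT.exists_isPath r.s r'.t
  refine interferesOn_of_mem_support hT.isAcyclic hp (hp.mem_support_of_not_ancestor hT
    r.adj_sPlus.symm (sPlus_ancestor_of_not_diverging hT hr) fun h' => h (.inl h')) ?_
  simpa using hp.reverse.mem_support_of_not_ancestor hT r'.adj_tMinus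
    (tMinus_ancestor_of_not_converging hT hr') fun h' => h (.inr h')

theorem interferesOn_of_converging (hT : T.IsTree) {r r' : Request T} (hr : ¬ Diverging T z r)
    (hr' : Converging T z r') (h : Ancestor T z r'.tMinus r.s) : InterferesOn T r r' := by
  obtain ⟨p, hp⟩ := hT.exists_isPath r.s r'.t
  have htt := hr'.t_ancestor_tMinus
  have hst : ¬ Ancestor T z r.s r'.t := fun hst => r'.adj_tMinus.ne
    (ancestor_antisymm hT.isAcyclic (ancestor_trans hT.isAcyclic h hst) htt)
  refine interferesOn_of_mem_support hT.isAcyclic hp (hp.mem_support_of_not_ancestor hT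
    r.adj_sPlus.symm (sPlus_ancestor_of_not_diverging hT hr) hst) ?_
  simpa using (hp.reverse.mem_support_iff_ancestor hT (ancestor_trans hT.isAcyclic htt h)).2
    ⟨htt, h⟩

theorem interferesOn_of_diverging (hT : T.IsTree) {r r' : Request T} (hr : Diverging T z r)
    (hr' : ¬ Converging T z r') (h : Ancestor T z r.sPlus r'.t) : InterferesOn T r r' := by
  obtain ⟨p, hp⟩ := hT.exists_isPath r.s r'.t
  have hss := hr.s_ancestor_sPlus
  have hts : ¬ Ancestor T z r'.t r.s := fun hts => r.adj_sPlus.ne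
    (ancestor_antisymm hT.isAcyclic hss (ancestor_trans hT.isAcyclic h hts))
  refine interferesOn_of_mem_support hT.isAcyclic hp
    ((hp.mem_support_iff_ancestor hT (ancestor_trans hT.isAcyclic hss h)).2 ⟨hss, h⟩) ?_
  simpa using hp.reverse.mem_support_of_not_ancestor hT r'.adj_tMinus
    (tMinus_ancestor_of_not_converging hT hr') hts

theorem related_of_not_interfere (hT : T.IsTree) {r r' : Request T} (h : ¬ Interfere T r r')
    (hr : ¬ Diverging T z r) (hr' : ¬ Converging T z r') : Related T z r.s r'.t :=
  by_contra fun hn => h (.inl (interferesOn_of_not_related hT hr hr' hn))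

theorem not_ancestor_s_of_not_interfere (hT : T.IsTree) {r r' : Request T}
    (h : ¬ Interfere T r r') (hr : ¬ Diverging T z r) (hr' : ¬ Diverging T z r') :
    ¬ Ancestor T z r.s r'.s := by
  intro hss
  by_cases hc : Converging T z r
  · exact h (.inr (interferesOn_of_converging hT hr' hc
      (ancestor_trans hT.isAcyclic (hc.tMinus_ancestor_s hT) hss)))
  · have hu : ¬ Related T z r.s r.t := Unimodal.not_related hT ⟨hc, hr⟩
    have hst := related_of_not_interfere hT (fun h' => h h'.symm) hr' hc
    exact hu (.inl (ancestor_trans hT.isAcyclic hss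
      (ancestor_of_related_of_not_related hT.isAcyclic hu (.inr hss) hst)))

theorem not_ancestor_t_of_not_interfere (hT : T.IsTree) {r r' : Request T}
    (h : ¬ Interfere T r r') (hr : ¬ Converging T z r) (hr' : ¬ Converging T z r') :
    ¬ Ancestor T z r.t r'.t := by
  intro htt
  by_cases hd : Diverging T z r
  · exact h (.inl (interferesOn_of_diverging hT hd hr'
      (ancestor_trans hT.isAcyclic (hd.sPlus_ancestor_t hT) htt)))
  · have hu : ¬ Related T z r.s r.t := Unimodal.not_related hT ⟨hr, hd⟩
    have hst := related_of_not_interfere hT h hd hr'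
    exact hu (.inr (ancestor_trans hT.isAcyclic htt
      (ancestor_of_related_of_not_related hT.isAcyclic (fun h' => hu h'.symm) (.inr htt) hst.symm)))

theorem not_related_s_of_not_interfere (hT : T.IsTree) {r r' : Request T}
    (h : ¬ Interfere T r r') (hr : ¬ Diverging T z r) (hr' : ¬ Diverging T z r') :
    ¬ Related T z r.s r'.s := by
  rintro (h' | h')
  · exact not_ancestor_s_of_not_interfere hT h hr hr' h'
  · exact not_ancestor_s_of_not_interfere hT (fun h'' => h h''.symm) hr' hr h'

theorem not_related_t_of_not_interfere (hT : T.IsTree) {r r' : Request T}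
    (h : ¬ Interfere T r r') (hr : ¬ Converging T z r) (hr' : ¬ Converging T z r') :
    ¬ Related T z r.t r'.t := by
  rintro (h' | h')
  · exact not_ancestor_t_of_not_interfere hT h hr hr' h'
  · exact not_ancestor_t_of_not_interfere hT (fun h'' => h h''.symm) hr' hr h'

theorem eq_pair_of_pairwise_not_interfere (hT : T.IsTree) {I : Set (Request T)}
    (hI : I.Pairwise fun r r' => ¬ Interfere T r r') {x y u v : Request T}
    (hx : x ∈ {r ∈ I | ¬ Diverging T z r}) (hy : y ∈ {r ∈ I | ¬ Diverging T z r}) (hxy : x ≠ y)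
    (hu : u ∈ {r ∈ I | ¬ Converging T z r}) (hv : v ∈ {r ∈ I | ¬ Converging T z r})
    (huv : u ≠ v) : I = {u, v} ∧ Unimodal T z u ∧ Unimodal T z v := by
  obtain ⟨hEuv, hFuv⟩ := eq_pair_of_pairwise_not_related hT.isAcyclic (s := Request.s)
    (t := Request.t)
    (fun r hr r' hr' hne => not_related_s_of_not_interfere hT (hI hr.1 hr'.1 hne) hr.2 hr'.2)
    (fun r hr r' hr' hne => not_related_t_of_not_interfere hT (hI hr.1 hr'.1 hne) hr.2 hr'.2)
    (fun r hr r' hr' hne => related_of_not_interfere hT (hI hr.1 hr'.1 hne) hr.2 hr'.2)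
    hx hy hxy hu hv huv
  have hunimodal : ∀ r ∈ ({u, v} : Set (Request T)), Unimodal T z r := fun r hr =>
    ⟨(hFuv ▸ hr : r ∈ {r ∈ I | ¬ Converging T z r}).2,
      (hEuv ▸ hr : r ∈ {r ∈ I | ¬ Diverging T z r}).2⟩
  refine ⟨Set.Subset.antisymm (fun r hr => ?_) (hEuv ▸ Set.sep_subset _ _),
    hunimodal u (by simp), hunimodal v (by simp)⟩
  by_cases hd : Diverging T z r
  · exact hFuv ▸ ⟨hr, fun hc => hc.not_diverging hT.isAcyclic hd⟩
  · exact hEuv ▸ ⟨hr, hd⟩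

end Requests

theorem independent_structure_general {V : Type*} (T : SimpleGraph V) (hT : T.IsTree)
    (z : V) (R I : Set (Request T))
    (hI : ∀ r ∈ I, ∀ r' ∈ I, r ≠ r' → ¬ Interfere T r r') :
    (∃ r r' : Request T, r ≠ r' ∧ I = {r, r'} ∧ Unimodal T z r ∧ Unimodal T z r') ∨
    (I ∩ ({r ∈ R | Diverging T z r} ∪ {r ∈ R | Unimodal T z r})).Subsingleton ∨
    (I ∩ ({r ∈ R | Converging T z r} ∪ {r ∈ R | Unimodal T z r})).Subsingleton := by
  by_cases hD : (I ∩ ({r ∈ R | Diverging T z r} ∪ {r ∈ R | Unimodal T z r})).Subsingleton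
  · exact .inr (.inl hD)
  by_cases hC : (I ∩ ({r ∈ R | Converging T z r} ∪ {r ∈ R | Unimodal T z r})).Subsingleton
  · exact .inr (.inr hC)
  obtain ⟨u, hu, v, hv, huv⟩ := Set.not_subsingleton_iff.1 hD
  obtain ⟨x, hx, y, hy, hxy⟩ := Set.not_subsingleton_iff.1 hC
  have hE : ∀ r ∈ I ∩ ({r ∈ R | Converging T z r} ∪ {r ∈ R | Unimodal T z r}),
      r ∈ {r ∈ I | ¬ Diverging T z r} := fun r hr =>
    ⟨hr.1, hr.2.elim (fun h => h.2.not_diverging hT.isAcyclic) fun h => h.2.2⟩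
  have hF : ∀ r ∈ I ∩ ({r ∈ R | Diverging T z r} ∪ {r ∈ R | Unimodal T z r}),
      r ∈ {r ∈ I | ¬ Converging T z r} := fun r hr =>
    ⟨hr.1, hr.2.elim (fun h hc => hc.not_diverging hT.isAcyclic h.2) fun h => h.2.1⟩
  obtain ⟨hIuv, hu', hv'⟩ := eq_pair_of_pairwise_not_interfere hT
    (fun r hr r' hr' => hI r hr r' hr') (hE x hx) (hE y hy) hxy (hF u hu) (hF v hv) huv
  exact .inl ⟨u, v, huv, hIuv, hu', hv'⟩

/-- Lemma 6: if `I` is a set of pairwise non-interfering requests of `R`, then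
either `I` consists of exactly two unimodal requests, or `I ∩ (R⁺ ∪ R^∨)` has at
most one element, or `I ∩ (R⁻ ∪ R^∨)` has at most one element. -/
theorem independent_structure {V : Type*} (T : SimpleGraph V) (hT : T.IsTree)
    (z : V) (R I : Set (Request T)) (hIR : I ⊆ R)
    (hI : ∀ r ∈ I, ∀ r' ∈ I, r ≠ r' → ¬ Interfere T r r') :
    (∃ r r' : Request T, r ≠ r' ∧ I = {r, r'} ∧ Unimodal T z r ∧ Unimodal T z r') ∨
    (I ∩ ({r ∈ R | Diverging T z r} ∪ {r ∈ R | Unimodal T z r})).Subsingleton ∨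
    (I ∩ ({r ∈ R | Converging T z r} ∪ {r ∈ R | Unimodal T z r})).Subsingleton :=
  independent_structure_general T hT z R I hI
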